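/- arXiv:2207.02532 — 3 statements merged into one kernel-verified Lean document; each statement's English description precedes it below -/
import Mathlib

section
/- Let α ∈ (0,1) and Q > 0. There exists κ > 0 such that for all real λ, Re[(λ² + iλQ)^α] ≥ κ |λ|^α (1 + |λ|)^α, where the principal branch of the power is used; in particular |exp(−t(λ² + iλQ)^α)| ≤ exp(−κ t |λ|^{α}) for all t > 0 and λ ∈ ℝ with |λ| ≤ 1, and more generally |exp(−t(λ²+iλQ)^α)| ≤ exp(−κ t |λ|^α (1+|λ|)^α) ≤ exp(−κ t |λ|^α). -/
open Complex Real

/-!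
On the closed right half-plane `|arg z| ≤ π / 2`, so `Re (z ^ α) = ‖z‖ ^ α cos (α arg z)` is at least
`cos (α π / 2) ‖z‖ ^ α`, and `cos (α π / 2) > 0` for `α < 1`. Writing `λ² + iλQ = λ (λ + iQ)`, the
modulus is `|λ| ‖λ + iQ‖ ≥ |λ| · (min 1 Q / 2) (1 + |λ|)`, since `‖λ + iQ‖ ≥ max |λ| Q`.
-/

namespace Complex

lemma cos_mul_pi_div_two_mul_norm_rpow_le_re_cpow {z : ℂ} (hz : 0 ≤ z.re) {α : ℝ}
    (hα₀ : 0 ≤ α) (hα₂ : α ≤ 2) :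
    Real.cos (α * (π / 2)) * ‖z‖ ^ α ≤ (z ^ (α : ℂ)).re := by
  have harg : |arg z * α| ≤ α * (π / 2) := by
    rw [abs_mul, abs_of_nonneg hα₀, mul_comm]
    exact mul_le_mul_of_nonneg_left (abs_arg_le_pi_div_two_iff.mpr hz) hα₀
  have hcos : Real.cos (α * (π / 2)) ≤ Real.cos (arg z * α) := by
    rw [← Real.cos_abs (arg z * α)]
    exact Real.cos_le_cos_of_nonneg_of_le_pi (abs_nonneg _) (by nlinarith [pi_pos]) harg
  rw [cpow_ofReal_re, mul_comm]
  exact mul_le_mul_of_nonneg_left hcos (by positivity)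

lemma min_one_abs_im_div_two_mul_one_add_abs_re_le_norm (w : ℂ) :
    min 1 |w.im| / 2 * (1 + |w.re|) ≤ ‖w‖ := by
  have hre := abs_re_le_norm w
  have him := abs_im_le_norm w
  have hm₁ := min_le_left 1 |w.im|
  have hm₂ := min_le_right 1 |w.im|
  have hm₀ : 0 ≤ min 1 |w.im| := le_min zero_le_one (abs_nonneg _)
  nlinarith [abs_nonneg w.re]

lemma norm_exp_neg_mul_le {z : ℂ} {t b : ℝ} (ht : 0 ≤ t) (hb : b ≤ z.re) :
    ‖exp (-(t : ℂ) * z)‖ ≤ Real.exp (-(t * b)) := by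
  rw [norm_exp, neg_mul, neg_re, re_ofReal_mul, Real.exp_le_exp, neg_le_neg_iff]
  exact mul_le_mul_of_nonneg_left hb ht

end Complex

theorem re_cpow_quadratic_phase_lower_bound
    (α Q : ℝ) (hα : α ∈ Set.Ioo (0:ℝ) 1) (hQ : 0 < Q) :
    ∃ κ > (0:ℝ),
      (∀ l : ℝ,
        κ * |l| ^ α * (1 + |l|) ^ α ≤ ((((l:ℂ)^2 + Complex.I * l * Q)) ^ (α : ℂ)).re) ∧
      (∀ t : ℝ, 0 < t → ∀ l : ℝ,
        ‖Complex.exp (-(t:ℂ) * (((l:ℂ)^2 + Complex.I * l * Q) ^ (α : ℂ)))‖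
          ≤ Real.exp (-(κ * t * |l| ^ α * (1 + |l|) ^ α)) ∧
        Real.exp (-(κ * t * |l| ^ α * (1 + |l|) ^ α)) ≤ Real.exp (-(κ * t * |l| ^ α))) := by
  obtain ⟨hα₀, hα₁⟩ := hα
  set c := min 1 Q / 2
  set κ := Real.cos (α * (π / 2)) * c ^ α
  have hc : 0 < c := by positivity
  have hcos : 0 < Real.cos (α * (π / 2)) :=
    Real.cos_pos_of_mem_Ioo ⟨by nlinarith [pi_pos], by nlinarith [pi_pos]⟩
  have hre (l : ℝ) : κ * |l| ^ α * (1 + |l|) ^ α ≤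
      (((l:ℂ)^2 + Complex.I * l * Q) ^ (α : ℂ)).re := by
    have hfactor : (l:ℂ)^2 + Complex.I * l * Q = l * (l + Q * Complex.I) := by ring
    have hw : c * (1 + |l|) ≤ ‖(l:ℂ) + Q * Complex.I‖ := by
      simpa [abs_of_pos hQ] using min_one_abs_im_div_two_mul_one_add_abs_re_le_norm (l + Q * I)
    calc κ * |l| ^ α * (1 + |l|) ^ α
        = Real.cos (α * (π / 2)) * |l| ^ α * (c * (1 + |l|)) ^ α := by
          rw [Real.mul_rpow hc.le (by positivity)]; ring
      _ ≤ Real.cos (α * (π / 2)) * |l| ^ α * ‖(l:ℂ) + Q * Complex.I‖ ^ α := by gcongr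
      _ = Real.cos (α * (π / 2)) * ‖(l:ℂ)^2 + Complex.I * l * Q‖ ^ α := by
          rw [hfactor, norm_mul, norm_real, Real.norm_eq_abs,
            Real.mul_rpow (abs_nonneg l) (norm_nonneg _), mul_assoc]
      _ ≤ _ := cos_mul_pi_div_two_mul_norm_rpow_le_re_cpow
          (by simp [← ofReal_pow]; positivity) hα₀.le (by linarith)
  refine ⟨κ, by positivity, hre, fun t ht l => ⟨?_, ?_⟩⟩
  · convert norm_exp_neg_mul_le ht.le (hre l) using 3
    ring
  · have h1 : 1 ≤ (1 + |l|) ^ α := Real.one_le_rpow (by linarith [abs_nonneg l]) hα₀.le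
    rw [Real.exp_le_exp, neg_le_neg_iff]
    exact le_mul_of_one_le_right (by positivity) h1
end

section
/- Let a > 0 and ε, k ∈ [0,∞). There exist constants c₁, c₂ > 0 (depending on a, ε, k) such that for all r ≥ 1, c₁ r^{−min{ε,k}} ≤ sup_{t ≥ 1} t^{−ε} (1 + t^{−1/2}|r − at|)^{−k} ≤ c₂ r^{−min{ε,k}}. -/
open Real Set

lemma pk_le_one {ε k t x : ℝ} (hε : 0 ≤ ε) (hk : 0 ≤ k) (ht : 1 ≤ t) (hx : 0 ≤ x) :
    t ^ (-ε) * (1 + x) ^ (-k) ≤ 1 := by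
  have h1 : t ^ (-ε) ≤ 1 := Real.rpow_le_one_of_one_le_of_nonpos ht (neg_nonpos.2 hε)
  have h2 : (1 + x) ^ (-k) ≤ 1 :=
    Real.rpow_le_one_of_one_le_of_nonpos (by linarith) (neg_nonpos.2 hk)
  have h3 : (0:ℝ) ≤ (1 + x) ^ (-k) := Real.rpow_nonneg (by linarith) _
  calc t ^ (-ε) * (1 + x) ^ (-k) ≤ 1 * 1 := mul_le_mul h1 h2 h3 zero_le_one
    _ = 1 := one_mul 1

lemma pk_key_upper {a ε k r t : ℝ} (ha : 0 < a) (hε : 0 ≤ ε) (hk : 0 ≤ k)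
    (hr : 1 ≤ r) (ht : 1 ≤ t) :
    t ^ (-ε) * (1 + t ^ (-(1/2:ℝ)) * |r - a * t|) ^ (-k) ≤ (a+1) ^ ε * r ^ (-(min ε k)) := by
  have ha1 : (0:ℝ) < a + 1 := by linarith
  have ht0 : (0:ℝ) < t := lt_of_lt_of_le one_pos ht
  have hr0 : (0:ℝ) < r := lt_of_lt_of_le one_pos hr
  have hm0 : 0 ≤ min ε k := le_min hε hk
  have hmε : min ε k ≤ ε := min_le_left _ _
  have hmk : min ε k ≤ k := min_le_right _ _
  have hxnn : 0 ≤ t ^ (-(1/2:ℝ)) * |r - a * t| :=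
    mul_nonneg (Real.rpow_nonneg ht0.le _) (abs_nonneg _)
  have hrm : (0:ℝ) ≤ r ^ (-(min ε k)) := Real.rpow_nonneg hr0.le _
  rcases le_or_gt r ((a+1)*t) with hcase | hcase
  · -- t ≥ r/(a+1)
    have hdiv : r / (a+1) ≤ t := (div_le_iff₀ ha1).2 (by linarith)
    have hdiv0 : 0 < r / (a+1) := div_pos hr0 ha1
    have h1 : t ^ (-ε) ≤ (r / (a+1)) ^ (-ε) :=
      Real.rpow_le_rpow_of_nonpos hdiv0 hdiv (neg_nonpos.2 hε)
    have h2 : (r / (a+1)) ^ (-ε) = (a+1) ^ ε * r ^ (-ε) := by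
      rw [Real.div_rpow hr0.le ha1.le, Real.rpow_neg ha1.le, div_eq_mul_inv, inv_inv, mul_comm]
    have h3 : (1 + t ^ (-(1/2:ℝ)) * |r - a * t|) ^ (-k) ≤ 1 :=
      Real.rpow_le_one_of_one_le_of_nonpos (by linarith) (neg_nonpos.2 hk)
    have h4 : r ^ (-ε) ≤ r ^ (-(min ε k)) :=
      Real.rpow_le_rpow_of_exponent_le hr (by linarith)
    have h5 : (0:ℝ) ≤ (a+1) ^ ε := Real.rpow_nonneg ha1.le _
    calc t ^ (-ε) * (1 + t ^ (-(1/2:ℝ)) * |r - a * t|) ^ (-k)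
        ≤ t ^ (-ε) * 1 := by
          exact mul_le_mul_of_nonneg_left h3 (Real.rpow_nonneg ht0.le _)
      _ = t ^ (-ε) := mul_one _
      _ ≤ (a+1) ^ ε * r ^ (-ε) := h2 ▸ h1
      _ ≤ (a+1) ^ ε * r ^ (-(min ε k)) := mul_le_mul_of_nonneg_left h4 h5
  · -- t < r/(a+1)
    set ρ := r / (a+1) with hρdef
    have hρ0 : 0 < ρ := div_pos hr0 ha1
    have htρ : t ≤ ρ := by
      rw [hρdef, le_div_iff₀ ha1]; nlinarith
    have hρ1 : 1 ≤ ρ := le_trans ht htρ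
    have hsub : ρ ≤ r - a * t := by
      rw [hρdef, div_le_iff₀ ha1]; nlinarith
    have hsub0 : 0 < r - a * t := lt_of_lt_of_le hρ0 hsub
    have habs : |r - a * t| = r - a * t := abs_of_pos hsub0
    have hy0 : 0 < t ^ (-(1/2:ℝ)) * ρ := mul_pos (Real.rpow_pos_of_pos ht0 _) hρ0
    have hy : t ^ (-(1/2:ℝ)) * ρ ≤ 1 + t ^ (-(1/2:ℝ)) * |r - a * t| := by
      rw [habs]
      have := mul_le_mul_of_nonneg_left hsub (Real.rpow_nonneg ht0.le (-(1/2:ℝ)))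
      linarith
    have h1 : (1 + t ^ (-(1/2:ℝ)) * |r - a * t|) ^ (-k) ≤ (t ^ (-(1/2:ℝ)) * ρ) ^ (-k) :=
      Real.rpow_le_rpow_of_nonpos hy0 hy (neg_nonpos.2 hk)
    have h2 : (t ^ (-(1/2:ℝ)) * ρ) ^ (-k) = t ^ (k/2) * ρ ^ (-k) := by
      have he : (-(1/2:ℝ)) * (-k) = k/2 := by ring
      rw [Real.mul_rpow (Real.rpow_nonneg ht0.le _) hρ0.le, ← Real.rpow_mul ht0.le, he]
    have h3 : t ^ (-ε) * (t ^ (k/2) * ρ ^ (-k)) = t ^ (k/2 - ε) * ρ ^ (-k) := by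
      rw [← mul_assoc, ← Real.rpow_add ht0]
      ring_nf
    have hρm : (0:ℝ) ≤ ρ ^ (-k) := Real.rpow_nonneg hρ0.le _
    have key : t ^ (k/2 - ε) * ρ ^ (-k) ≤ ρ ^ (-(min ε k)) := by
      rcases le_or_gt (k/2) ε with hh | hh
      · have ha' : t ^ (k/2 - ε) ≤ 1 :=
          Real.rpow_le_one_of_one_le_of_nonpos ht (by linarith)
        have hb' : ρ ^ (-k) ≤ ρ ^ (-(min ε k)) :=
          Real.rpow_le_rpow_of_exponent_le hρ1 (by linarith)
        calc t ^ (k/2 - ε) * ρ ^ (-k) ≤ 1 * ρ ^ (-k) :=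
              mul_le_mul_of_nonneg_right ha' hρm
          _ = ρ ^ (-k) := one_mul _
          _ ≤ ρ ^ (-(min ε k)) := hb'
      · have ha' : t ^ (k/2 - ε) ≤ ρ ^ (k/2 - ε) :=
          Real.rpow_le_rpow ht0.le htρ (by linarith)
        have hb' : ρ ^ (k/2 - ε) * ρ ^ (-k) = ρ ^ (-(k/2 + ε)) := by
          rw [← Real.rpow_add hρ0]; ring_nf
        have hc' : ρ ^ (-(k/2 + ε)) ≤ ρ ^ (-(min ε k)) :=
          Real.rpow_le_rpow_of_exponent_le hρ1 (by
            have : min ε k ≤ ε := min_le_left _ _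
            linarith)
        calc t ^ (k/2 - ε) * ρ ^ (-k) ≤ ρ ^ (k/2 - ε) * ρ ^ (-k) :=
              mul_le_mul_of_nonneg_right ha' hρm
          _ = ρ ^ (-(k/2 + ε)) := hb'
          _ ≤ ρ ^ (-(min ε k)) := hc'
    have hfin : ρ ^ (-(min ε k)) ≤ (a+1) ^ ε * r ^ (-(min ε k)) := by
      have e1 : ρ ^ (-(min ε k)) = (a+1) ^ (min ε k) * r ^ (-(min ε k)) := by
        rw [hρdef, Real.div_rpow hr0.le ha1.le, Real.rpow_neg ha1.le, div_eq_mul_inv, inv_inv, mul_comm]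
      rw [e1]
      exact mul_le_mul_of_nonneg_right
        (Real.rpow_le_rpow_of_exponent_le (by linarith) hmε) hrm
    calc t ^ (-ε) * (1 + t ^ (-(1/2:ℝ)) * |r - a * t|) ^ (-k)
        ≤ t ^ (-ε) * (t ^ (-(1/2:ℝ)) * ρ) ^ (-k) :=
          mul_le_mul_of_nonneg_left h1 (Real.rpow_nonneg ht0.le _)
      _ = t ^ (k/2 - ε) * ρ ^ (-k) := by rw [h2, h3]
      _ ≤ ρ ^ (-(min ε k)) := key
      _ ≤ (a+1) ^ ε * r ^ (-(min ε k)) := hfin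

theorem sup_peak_two_sided_bound
    (a ε k : ℝ) (ha : 0 < a) (hε : 0 ≤ ε) (hk : 0 ≤ k) :
    ∃ c₁ > (0:ℝ), ∃ c₂ > (0:ℝ), ∀ r : ℝ, 1 ≤ r →
      c₁ * r ^ (-(min ε k)) ≤
        (⨆ t ∈ Set.Ici (1:ℝ), t ^ (-ε) * (1 + t ^ (-(1/2:ℝ)) * |r - a * t|) ^ (-k)) ∧
      (⨆ t ∈ Set.Ici (1:ℝ), t ^ (-ε) * (1 + t ^ (-(1/2:ℝ)) * |r - a * t|) ^ (-k)) ≤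
        c₂ * r ^ (-(min ε k)) := by
  have ha1 : (0:ℝ) < a + 1 := by linarith
  have h2a : (0:ℝ) < 2 + a := by linarith
  refine ⟨min ((2+a) ^ (-k) * min 1 (a ^ (-k))) (a ^ ε), ?_, (a+1) ^ ε, ?_, ?_⟩
  · exact lt_min (mul_pos (Real.rpow_pos_of_pos h2a _)
      (lt_min one_pos (Real.rpow_pos_of_pos ha _))) (Real.rpow_pos_of_pos ha _)
  · exact Real.rpow_pos_of_pos ha1 _
  intro r hr
  have hr0 : (0:ℝ) < r := lt_of_lt_of_le one_pos hr
  have hrm : (0:ℝ) ≤ r ^ (-(min ε k)) := Real.rpow_nonneg hr0.le _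
  -- boundedness and access to the sup
  have hb : ∀ t : ℝ, (⨆ (_ : t ∈ Set.Ici (1:ℝ)),
      t ^ (-ε) * (1 + t ^ (-(1/2:ℝ)) * |r - a * t|) ^ (-k)) ≤ 1 := fun t =>
    Real.iSup_le (fun ht => pk_le_one hε hk ht
      (mul_nonneg (Real.rpow_nonneg (le_trans zero_le_one ht) _) (abs_nonneg _))) zero_le_one
  have hbdd : BddAbove (Set.range fun t : ℝ => ⨆ (_ : t ∈ Set.Ici (1:ℝ)),
      t ^ (-ε) * (1 + t ^ (-(1/2:ℝ)) * |r - a * t|) ^ (-k)) := by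
    refine ⟨1, ?_⟩
    rintro x ⟨t, rfl⟩
    exact hb t
  have hle : ∀ t : ℝ, 1 ≤ t →
      t ^ (-ε) * (1 + t ^ (-(1/2:ℝ)) * |r - a * t|) ^ (-k) ≤
      ⨆ t ∈ Set.Ici (1:ℝ), t ^ (-ε) * (1 + t ^ (-(1/2:ℝ)) * |r - a * t|) ^ (-k) := by
    intro t ht
    have h := le_ciSup hbdd t
    rwa [ciSup_pos (show t ∈ Set.Ici (1:ℝ) from ht)] at h
  constructor
  · -- lower bound
    -- value at t = 1
    have hval1 : (1:ℝ) ^ (-ε) * (1 + (1:ℝ) ^ (-(1/2:ℝ)) * |r - a * 1|) ^ (-k) =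
        (1 + |r - a|) ^ (-k) := by
      rw [Real.one_rpow, Real.one_rpow, one_mul, one_mul, mul_one]
    have habs : |r - a| ≤ r + a := abs_le.2 ⟨by linarith, by linarith⟩
    have h1r : 1 + |r - a| ≤ (2+a) * r := by nlinarith
    have h1r0 : (0:ℝ) < 1 + |r - a| := by
      have := abs_nonneg (r - a); linarith
    have hlow1 : (2+a) ^ (-k) * r ^ (-k) ≤ (1 + |r - a|) ^ (-k) := by
      have := Real.rpow_le_rpow_of_nonpos h1r0 h1r (neg_nonpos.2 hk)
      rwa [Real.mul_rpow h2a.le hr0.le] at this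
    have hF1 : (2+a) ^ (-k) * r ^ (-k) ≤
        ⨆ t ∈ Set.Ici (1:ℝ), t ^ (-ε) * (1 + t ^ (-(1/2:ℝ)) * |r - a * t|) ^ (-k) := by
      have := hle 1 le_rfl
      rw [hval1] at this
      exact le_trans hlow1 this
    have hc1a : min ((2+a) ^ (-k) * min 1 (a ^ (-k))) (a ^ ε) ≤ (2+a) ^ (-k) * min 1 (a ^ (-k)) :=
      min_le_left _ _
    rcases le_or_gt k ε with hke | hke
    · -- min ε k = k
      have hmk : min ε k = k := min_eq_right hke
      rw [hmk]
      calc min ((2+a) ^ (-k) * min 1 (a ^ (-k))) (a ^ ε) * r ^ (-k)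
          ≤ (2+a) ^ (-k) * min 1 (a ^ (-k)) * r ^ (-k) :=
            mul_le_mul_of_nonneg_right hc1a (Real.rpow_nonneg hr0.le _)
        _ ≤ (2+a) ^ (-k) * 1 * r ^ (-k) := by
            have : min 1 (a ^ (-k)) ≤ 1 := min_le_left _ _
            have h2ak : (0:ℝ) ≤ (2+a) ^ (-k) := Real.rpow_nonneg h2a.le _
            have hrk : (0:ℝ) ≤ r ^ (-k) := Real.rpow_nonneg hr0.le _
            exact mul_le_mul_of_nonneg_right (mul_le_mul_of_nonneg_left this h2ak) hrk
        _ = (2+a) ^ (-k) * r ^ (-k) := by ring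
        _ ≤ _ := hF1
    · -- min ε k = ε
      have hmε : min ε k = ε := min_eq_left hke.le
      rw [hmε]
      rcases le_or_gt a r with har | har
      · -- use t = r / a
        have htra : (1:ℝ) ≤ r / a := (one_le_div ha).2 har
        have hcancel : a * (r / a) = r := by field_simp
        have hval : (r/a) ^ (-ε) * (1 + (r/a) ^ (-(1/2:ℝ)) * |r - a * (r/a)|) ^ (-k) =
            a ^ ε * r ^ (-ε) := by
          rw [hcancel, sub_self, abs_zero, mul_zero, add_zero, Real.one_rpow, mul_one,
            Real.div_rpow hr0.le ha.le, Real.rpow_neg ha.le, div_eq_mul_inv, inv_inv, mul_comm]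
        have := hle (r/a) htra
        rw [hval] at this
        calc min ((2+a) ^ (-k) * min 1 (a ^ (-k))) (a ^ ε) * r ^ (-ε)
            ≤ a ^ ε * r ^ (-ε) := mul_le_mul_of_nonneg_right (min_le_right _ _)
              (Real.rpow_nonneg hr0.le _)
          _ ≤ _ := this
      · -- r < a, use t = 1
        have hrka : a ^ (-k) ≤ r ^ (-k) :=
          Real.rpow_le_rpow_of_nonpos hr0 har.le (neg_nonpos.2 hk)
        have hrε : r ^ (-ε) ≤ 1 := Real.rpow_le_one_of_one_le_of_nonpos hr (neg_nonpos.2 hε)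
        have h2ak : (0:ℝ) ≤ (2+a) ^ (-k) := Real.rpow_nonneg h2a.le _
        have hak : (0:ℝ) ≤ a ^ (-k) := Real.rpow_nonneg ha.le _
        have hrknn : (0:ℝ) ≤ r ^ (-ε) := Real.rpow_nonneg hr0.le _
        have hstep : min ((2+a) ^ (-k) * min 1 (a ^ (-k))) (a ^ ε) * r ^ (-ε) ≤
            (2+a) ^ (-k) * r ^ (-k) := by
          have h1 : min ((2+a) ^ (-k) * min 1 (a ^ (-k))) (a ^ ε) ≤ (2+a) ^ (-k) * a ^ (-k) := by
            have : min 1 (a ^ (-k)) ≤ a ^ (-k) := min_le_right _ _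
            have := mul_le_mul_of_nonneg_left this h2ak
            exact le_trans hc1a this
          have h2 : (2+a) ^ (-k) * a ^ (-k) ≤ (2+a) ^ (-k) * r ^ (-k) :=
            mul_le_mul_of_nonneg_left hrka h2ak
          have hc1nn : (0:ℝ) ≤ min ((2+a) ^ (-k) * min 1 (a ^ (-k))) (a ^ ε) :=
            le_min (mul_nonneg h2ak (le_min zero_le_one hak)) (Real.rpow_nonneg ha.le _)
          calc min ((2+a) ^ (-k) * min 1 (a ^ (-k))) (a ^ ε) * r ^ (-ε)
              ≤ min ((2+a) ^ (-k) * min 1 (a ^ (-k))) (a ^ ε) * 1 :=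
                mul_le_mul_of_nonneg_left hrε hc1nn
            _ = min ((2+a) ^ (-k) * min 1 (a ^ (-k))) (a ^ ε) := mul_one _
            _ ≤ (2+a) ^ (-k) * a ^ (-k) := h1
            _ ≤ (2+a) ^ (-k) * r ^ (-k) := h2
        exact le_trans hstep hF1
  · -- upper bound
    refine Real.iSup_le (fun t => Real.iSup_le (fun ht => ?_) ?_) ?_
    · exact pk_key_upper ha hε hk hr ht
    · exact mul_nonneg (Real.rpow_nonneg ha1.le _) hrm
    · exact mul_nonneg (Real.rpow_nonneg ha1.le _) hrm
end

section
/- Let Q > 0 and γ ≥ 0, and define F : ℝ → ℂ by F(v) = (iv)^γ e^{−(iQv)^{1/2}}, where the powers use the branch of w ↦ w^s holomorphic on ℂ \ (−∞,0] agreeing with the arithmetic power on (0,∞). Then F extends holomorphically to the lower half-plane {z : Im z < 0}, and for z = v + is with s < 0 one has |F(z)| ≤ |v − is|^γ e^{−cos(π/4) Q^{1/2} |v|^{1/2}} whenever |arg(iz)| ≤ π/2. Consequently F belongs to the Hardy space H²(Ω₋) of the lower half-plane, its Fourier transform F̂ vanishes on (0,∞), and there exists σ > 0 with F̂(−σ)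 ≠ 0. -/
/-!
For `Im z ≤ 0` both `I * z` and `I * Q * z` lie in the closed right half-plane, where the
principal square root has argument at most `π / 4`; this gives holomorphy off `0` and the
decay `‖F z‖ ≤ ‖z‖ ^ γ * exp (-cos (π / 4) * √(Q ‖z‖))`, hence `‖F z‖ ≤ C / (1 + (Re z) ^ 2)`
uniformly on the closed lower half-plane. The `L²` bounds on horizontal lines follow at once.
For `ξ > 0` the function `e^{-2πiξz} F z` is in addition bounded by `e^{2πξ Im z}` there, so
Cauchy's theorem on the squares `[-R, R] × [-R, 0]` and `R → ∞` kill its integral over `ℝ`, which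
is `𝓕 F ξ`. Were `𝓕 F` also zero on `(-∞, 0)`, it would vanish identically by continuity and
Fourier inversion would give `F = 0` on `ℝ`, whereas `F 1 ≠ 0`.
-/

open Complex Real MeasureTheory FourierTransform Filter Set Topology

theorem cos_pi_div_four_mul_sqrt_norm_le_re_cpow_half {w : ℂ} (hw : 0 ≤ w.re) :
    Real.cos (π / 4) * √‖w‖ ≤ (w ^ (1 / 2 : ℂ)).re := by
  have harg : |arg w * (1 / 2)| ≤ π / 4 := by
    rw [abs_mul, abs_of_pos (by norm_num : (0 : ℝ) < 1 / 2)]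
    linarith [abs_arg_le_pi_div_two_iff.mpr hw]
  have hcos : Real.cos (π / 4) ≤ Real.cos (arg w * (1 / 2)) := by
    rw [← Real.cos_abs (arg w * (1 / 2))]
    exact Real.cos_le_cos_of_nonneg_of_le_pi (abs_nonneg _) (by linarith [pi_pos]) harg
  rw [show (1 / 2 : ℂ) = ((1 / 2 : ℝ) : ℂ) by push_cast; rfl, cpow_ofReal_re,
    ← Real.sqrt_eq_rpow, mul_comm]
  exact mul_le_mul_of_nonneg_left hcos (Real.sqrt_nonneg _)

theorem exists_rpow_le_mul_exp_mul_sqrt {p c : ℝ} (hp : 0 ≤ p) (hc : 0 < c) :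
    ∃ C, ∀ r : ℝ, 0 ≤ r → r ^ p ≤ C * Real.exp (c * √r) := by
  set k := ⌈p⌉₊
  refine ⟨1 + (2 * k).factorial / c ^ (2 * k), fun r hr => ?_⟩
  have hpow : r ^ p ≤ 1 + r ^ k := by
    rcases le_or_gt r 1 with h1 | h1
    · linarith [Real.rpow_le_one hr h1 hp, pow_nonneg hr k]
    · have := Real.rpow_le_rpow_of_exponent_le h1.le (Nat.le_ceil p)
      rw [Real.rpow_natCast] at this
      linarith
  -- `r ^ k = (√r) ^ (2k)` is controlled by one term of the exponential series of `c √r`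
  have hk : r ^ k ≤ (2 * k).factorial / c ^ (2 * k) * Real.exp (c * √r) := by
    have h := Real.pow_div_factorial_le_exp (x := c * √r) (by positivity) (2 * k)
    rw [mul_pow, pow_mul √r, Real.sq_sqrt hr, div_le_iff₀ (by positivity)] at h
    rw [div_mul_eq_mul_div, le_div_iff₀ (by positivity)]
    linarith
  have hexp : 1 ≤ Real.exp (c * √r) := Real.one_le_exp (by positivity)
  nlinarith

theorem exists_rpow_mul_exp_neg_mul_sqrt_le_div_one_add_sq {p c : ℝ} (hp : 0 ≤ p) (hc : 0 < c) :
    ∃ C, ∀ r : ℝ, 0 ≤ r → r ^ p * Real.exp (-(c * √r)) ≤ C / (1 + r ^ 2) := by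
  obtain ⟨C₁, hC₁⟩ := exists_rpow_le_mul_exp_mul_sqrt hp hc
  obtain ⟨C₂, hC₂⟩ := exists_rpow_le_mul_exp_mul_sqrt (p := p + 2) (by linarith) hc
  refine ⟨C₁ + C₂, fun r hr => ?_⟩
  have hsplit : (1 + r ^ 2) * r ^ p = r ^ p + r ^ (p + 2) := by
    rw [Real.rpow_add' hr (by linarith), Real.rpow_two]; ring
  rw [Real.exp_neg, ← div_eq_mul_inv, div_le_div_iff₀ (Real.exp_pos _) (by positivity),
    mul_comm, hsplit]
  linarith [hC₁ r hr, hC₂ r hr]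

theorem integrable_of_norm_le_div_one_add_sq {E : Type*} [NormedAddCommGroup E] {f : ℝ → E}
    {C : ℝ} (hf : Continuous f) (hC : ∀ v, ‖f v‖ ≤ C / (1 + v ^ 2)) : Integrable f :=
  (integrable_inv_one_add_sq.const_mul C).mono' hf.aestronglyMeasurable
    (Eventually.of_forall fun v => by simpa [div_eq_mul_inv] using hC v)

section LowerHalfPlane

variable {G : ℂ → ℂ} {a C : ℝ}

/-- Cauchy's theorem on the square `[-R, R] × [-R, 0]`: the three sides below the real axis
carry the integral, and the bound makes each of them small. -/
theorem norm_intervalIntegral_le_of_lowerHalfPlane (ha : 0 ≤ a)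
    (hcont : ContinuousOn G {z | z.im ≤ 0}) (hdiff : DifferentiableOn ℂ G {z | z.im < 0})
    (hbound : ∀ z : ℂ, z.im ≤ 0 → ‖G z‖ ≤ Real.exp (a * z.im) * (C / (1 + z.re ^ 2)))
    {R : ℝ} (hR : 0 < R) :
    ‖∫ x : ℝ in -R..R, G x‖ ≤ 2 * C * (R * Real.exp (-a * R)) + 2 * (C / R) := by
  have hC : 0 ≤ C := by simpa using (norm_nonneg _).trans (hbound 0 le_rfl)
  have hrect := integral_boundary_rect_eq_zero_of_continuousOn_of_differentiableOn G
    ⟨-R, -R⟩ ⟨R, 0⟩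
    (hcont.mono fun p hp => by
      have := (Complex.mem_reProdIm.mp hp).2
      rw [uIcc_of_le (by linarith)] at this
      exact this.2)
    (hdiff.mono fun p hp => by
      have := (Complex.mem_reProdIm.mp hp).2
      simp only [max_eq_right (by linarith : -R ≤ 0)] at this
      exact this.2)
  simp only [ofReal_zero, zero_mul, add_zero] at hrect
  have hbottom : ‖∫ x : ℝ in -R..R, G (x + (-R : ℝ) * I)‖ ≤ 2 * C * (R * Real.exp (-a * R)) := by
    refine (intervalIntegral.norm_integral_le_of_norm_le_const
      (C := Real.exp (-a * R) * C) fun x _ => ?_).trans_eq ?_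
    · refine (hbound _ (by simp [hR.le])).trans ?_
      norm_num
      exact mul_le_mul_of_nonneg_left (div_le_self hC (by nlinarith)) (Real.exp_pos _).le
    · rw [abs_of_pos (by linarith)]; ring
  have hside (b : ℝ) (hb : b ^ 2 = R ^ 2) :
      ‖I • ∫ y : ℝ in -R..0, G (b + y * I)‖ ≤ C / R := by
    rw [norm_smul, norm_I, one_mul]
    refine (intervalIntegral.norm_integral_le_of_norm_le_const (C := C / (1 + R ^ 2))
      fun y hy => ?_).trans ?_
    · rw [uIoc_of_le (by linarith)] at hy
      refine (hbound _ (by simpa using hy.2)).trans ?_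
      norm_num [hb]
      exact mul_le_of_le_one_left (by positivity)
        (Real.exp_le_one_iff.mpr (mul_nonpos_of_nonneg_of_nonpos ha hy.2))
    · rw [sub_neg_eq_add, zero_add, abs_of_pos hR, div_mul_eq_mul_div,
        div_le_div_iff₀ (by positivity) hR]
      nlinarith
  have hsplit : ∫ x : ℝ in -R..R, G x = (∫ x : ℝ in -R..R, G (x + (-R : ℝ) * I)) +
      I • (∫ y : ℝ in -R..0, G (R + y * I)) - I • ∫ y : ℝ in -R..0, G ((-R : ℝ) + y * I) := by
    linear_combination -hrect
  rw [hsplit]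
  refine (norm_sub_le _ _).trans ((add_le_add_left (norm_add_le _ _) _).trans ?_)
  linarith [hside R rfl, hside (-R) (neg_sq R)]

theorem integral_eq_zero_of_lowerHalfPlane (ha : 0 < a)
    (hcont : ContinuousOn G {z | z.im ≤ 0}) (hdiff : DifferentiableOn ℂ G {z | z.im < 0})
    (hbound : ∀ z : ℂ, z.im ≤ 0 → ‖G z‖ ≤ Real.exp (a * z.im) * (C / (1 + z.re ^ 2))) :
    ∫ v : ℝ, G v = 0 := by
  have hint : Integrable fun v : ℝ => G v :=
    integrable_of_norm_le_div_one_add_sq (hcont.comp_continuous continuous_ofReal fun v => by simp)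
      fun v => by simpa using hbound v (by simp)
  have herr : Tendsto (fun R => 2 * C * (R * Real.exp (-a * R)) + 2 * (C / R)) atTop (𝓝 0) := by
    have h₁ := (tendsto_rpow_mul_exp_neg_mul_atTop_nhds_zero 1 a ha).const_mul (2 * C)
    have h₂ := ((tendsto_const_nhds (x := C)).div_atTop tendsto_id).const_mul 2
    simpa using h₁.add h₂
  refine tendsto_nhds_unique
    (intervalIntegral_tendsto_integral hint tendsto_neg_atTop_atBot tendsto_id)
    (squeeze_zero_norm' ?_ herr)
  filter_upwards [eventually_gt_atTop 0] with R hR using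
    norm_intervalIntegral_le_of_lowerHalfPlane ha.le hcont hdiff hbound hR

end LowerHalfPlane

theorem fourier_eq_zero_of_lowerHalfPlane {f : ℂ → ℂ} {C : ℝ}
    (hcont : ContinuousOn f {z | z.im ≤ 0}) (hdiff : DifferentiableOn ℂ f {z | z.im < 0})
    (hbound : ∀ z : ℂ, z.im ≤ 0 → ‖f z‖ ≤ C / (1 + z.re ^ 2)) {ξ : ℝ} (hξ : 0 < ξ) :
    𝓕 (fun v : ℝ => f v) ξ = 0 := by
  have hG := integral_eq_zero_of_lowerHalfPlane
    (G := fun z => cexp (-2 * π * ξ * z * I) * f z) (a := 2 * π * ξ) (C := C) (by positivity)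
    (by fun_prop) (by fun_prop)
    (fun z hz => by
      rw [norm_mul, norm_exp]
      refine mul_le_mul (le_of_eq ?_) (hbound z hz) (norm_nonneg _) (Real.exp_pos _).le
      congr 1; simp)
  rw [Real.fourier_real_eq_integral_exp_smul]
  refine (integral_congr_ae (Eventually.of_forall fun v => ?_)).trans hG
  simp only [smul_eq_mul]; push_cast; ring_nf

theorem eq_zero_of_fourier_eq_zero_of_ne_zero {E : Type*} [NormedAddCommGroup E]
    [NormedSpace ℂ E] [CompleteSpace E] {f : ℝ → E} (hf : Continuous f) (hint : Integrable f)
    (h : ∀ ξ ≠ 0, 𝓕 f ξ = 0) : f = 0 := by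
  have hcont : Continuous (𝓕 f) := VectorFourier.fourierIntegral_continuous
    Real.continuous_fourierChar (innerSL ℝ).continuous₂ hint
  have hzero : 𝓕 f = 0 := hcont.ext_on (dense_compl_singleton 0) continuous_const h
  have hinv := hf.fourierInv_fourier_eq hint (by rw [hzero]; exact integrable_zero ℝ E volume)
  rw [← hinv, hzero]
  ext v
  simp [Real.fourierInv_eq]

noncomputable def hardyFn (Q γ : ℝ) (z : ℂ) : ℂ :=
  (I * z) ^ (γ : ℂ) * Complex.exp (-((I * Q * z) ^ ((1 : ℂ) / 2)))

theorem I_mul_mem_slitPlane {z : ℂ} (hz : z.im ≤ 0) (hz₀ : z ≠ 0) : I * z ∈ slitPlane := by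
  rcases hz.lt_or_eq with hlt | heq
  · left; simpa using hlt
  · right
    have hre : z.re ≠ 0 := fun h => hz₀ (Complex.ext h heq)
    simpa using hre

section hardyFn

variable {Q γ : ℝ}

theorem norm_hardyFn_le (hQ : 0 ≤ Q) {z : ℂ} (hz : z.im ≤ 0) :
    ‖hardyFn Q γ z‖ ≤ ‖z‖ ^ γ * Real.exp (-(Real.cos (π / 4) * √Q * √‖z‖)) := by
  have hre : 0 ≤ (I * Q * z).re := by simp; nlinarith
  have hsqrt := cos_pi_div_four_mul_sqrt_norm_le_re_cpow_half hre
  rw [show ‖I * Q * z‖ = Q * ‖z‖ by simp [abs_of_nonneg hQ], Real.sqrt_mul hQ, ← mul_assoc]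
    at hsqrt
  rw [hardyFn, norm_mul, norm_cpow_real, norm_mul, norm_I, one_mul, norm_exp, neg_re]
  gcongr

theorem exists_norm_hardyFn_le_div_one_add_sq (hQ : 0 < Q) (hγ : 0 ≤ γ) :
    ∃ C, ∀ z : ℂ, z.im ≤ 0 → ‖hardyFn Q γ z‖ ≤ C / (1 + z.re ^ 2) := by
  obtain ⟨C, hC⟩ := exists_rpow_mul_exp_neg_mul_sqrt_le_div_one_add_sq hγ
    (c := Real.cos (π / 4) * √Q) (by rw [Real.cos_pi_div_four]; positivity)
  have hC₀ : 0 ≤ C := by simpa using (Real.rpow_nonneg le_rfl γ).trans (by simpa using hC 0 le_rfl)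
  refine ⟨C, fun z hz => ?_⟩
  calc ‖hardyFn Q γ z‖
      ≤ ‖z‖ ^ γ * Real.exp (-(Real.cos (π / 4) * √Q * √‖z‖)) := norm_hardyFn_le hQ.le hz
    _ ≤ C / (1 + ‖z‖ ^ 2) := hC _ (norm_nonneg z)
    _ ≤ C / (1 + z.re ^ 2) := by
      have : z.re ^ 2 ≤ ‖z‖ ^ 2 := sq_le_sq.mpr (by simpa using abs_re_le_norm z)
      exact div_le_div_of_nonneg_left hC₀ (by positivity) (by linarith)

theorem differentiableAt_hardyFn (hQ : 0 < Q) {z : ℂ} (hz : z.im ≤ 0) (hz₀ : z ≠ 0) :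
    DifferentiableAt ℂ (hardyFn Q γ) z := by
  have hQz : I * Q * z ∈ slitPlane := by
    rw [mul_assoc]
    exact I_mul_mem_slitPlane (by simpa using mul_nonpos_of_nonneg_of_nonpos hQ.le hz)
      (mul_ne_zero (ofReal_ne_zero.mpr hQ.ne') hz₀)
  have hz' := I_mul_mem_slitPlane hz hz₀
  unfold hardyFn
  fun_prop (disch := assumption)

theorem continuousAt_hardyFn_zero (hγ : 0 ≤ γ) : ContinuousAt (hardyFn Q γ) 0 := by
  have hcpow {b : ℂ} (hb : 0 < b.re) (c : ℂ) : ContinuousAt (fun w : ℂ => (c * w) ^ b) 0 := by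
    have : ContinuousAt (· ^ b) (c * 0) := continuousAt_cpow_const_of_re_pos (by simp) hb
    exact this.comp (by fun_prop)
  refine ContinuousAt.mul ?_ (hcpow (by norm_num) _).neg.cexp
  rcases hγ.eq_or_lt with rfl | hγ
  · simpa using continuousAt_const
  · exact hcpow (by simpa using hγ) I

theorem continuousOn_hardyFn (hQ : 0 < Q) (hγ : 0 ≤ γ) :
    ContinuousOn (hardyFn Q γ) {z | z.im ≤ 0} := fun z hz => by
  rcases eq_or_ne z 0 with rfl | hz₀
  · exact (continuousAt_hardyFn_zero hγ).continuousWithinAt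
  · exact (differentiableAt_hardyFn hQ hz hz₀).continuousAt.continuousWithinAt

theorem differentiableOn_hardyFn (hQ : 0 < Q) :
    DifferentiableOn ℂ (hardyFn Q γ) {z | z.im < 0} := fun z (hz : z.im < 0) =>
  (differentiableAt_hardyFn hQ hz.le (by rintro rfl; simp at hz)).differentiableWithinAt

theorem norm_hardyFn_add_mul_I_le (hQ : 0 ≤ Q) (v : ℝ) {s : ℝ} (hs : s ≤ 0) :
    ‖hardyFn Q γ (v + s * I)‖ ≤
      ‖(v : ℂ) - s * I‖ ^ γ * Real.exp (-(Real.cos (π / 4) * √Q * √|v|)) := by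
  have hnorm : ‖(v : ℂ) - s * I‖ = ‖(v : ℂ) + s * I‖ := by
    rw [← norm_conj]; simp
  have hv : √|v| ≤ √‖(v : ℂ) + s * I‖ :=
    Real.sqrt_le_sqrt (by simpa using abs_re_le_norm ((v : ℂ) + s * I))
  have hc : 0 ≤ Real.cos (π / 4) * √Q := by rw [Real.cos_pi_div_four]; positivity
  refine (norm_hardyFn_le hQ (by simpa using hs)).trans ?_
  rw [hnorm]
  gcongr

theorem exists_integral_norm_hardyFn_sq_le (hQ : 0 < Q) (hγ : 0 ≤ γ) :
    ∃ B, ∀ s : ℝ, s ≤ 0 → ∫ v : ℝ, ‖hardyFn Q γ (v + s * I)‖ ^ 2 ≤ B := by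
  obtain ⟨C, hC⟩ := exists_norm_hardyFn_le_div_one_add_sq hQ hγ
  refine ⟨∫ v : ℝ, C ^ 2 / (1 + v ^ 2), fun s hs => ?_⟩
  have hbound (v : ℝ) : ‖hardyFn Q γ (v + s * I)‖ ^ 2 ≤ C ^ 2 / (1 + v ^ 2) := by
    have h := hC (v + s * I) (by simpa using hs)
    simp only [add_re, ofReal_re, mul_re, ofReal_im, I_re, I_im, mul_zero, mul_one, sub_zero,
      add_zero] at h
    calc ‖hardyFn Q γ (v + s * I)‖ ^ 2 ≤ (C / (1 + v ^ 2)) ^ 2 := by gcongr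
      _ = C ^ 2 / (1 + v ^ 2) / (1 + v ^ 2) := by ring
      _ ≤ C ^ 2 / (1 + v ^ 2) := div_le_self (by positivity) (by nlinarith)
  have hcont : Continuous fun v : ℝ => hardyFn Q γ (v + s * I) :=
    (continuousOn_hardyFn hQ hγ).comp_continuous (by fun_prop) fun v => by simpa using hs
  refine integral_mono ?_ ?_ hbound
  · exact integrable_of_norm_le_div_one_add_sq (hcont.norm.pow 2)
      fun v => by simpa using hbound v
  · simpa [div_eq_mul_inv] using integrable_inv_one_add_sq.const_mul (C ^ 2)

end hardyFn

theorem hardy_space_lower_half_plane_function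
    (Q γ : ℝ) (hQ : 0 < Q) (hγ : 0 ≤ γ)
    (F : ℂ → ℂ)
    (hF : ∀ z : ℂ, F z =
      (Complex.I * z) ^ (γ : ℂ) * Complex.exp (-((Complex.I * Q * z) ^ ((1:ℂ)/2)))) :
    DifferentiableOn ℂ F {z : ℂ | z.im < 0} ∧
    (∀ v s : ℝ, s < 0 →
      ‖F (v + s * Complex.I)‖ ≤
        ‖(v : ℂ) - s * Complex.I‖ ^ γ *
          Real.exp (-(Real.cos (Real.pi / 4) * Real.sqrt Q * Real.sqrt |v|))) ∧
    (∃ B : ℝ, ∀ s : ℝ, s < 0 →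
      ∫ v : ℝ, (‖F (v + s * Complex.I)‖) ^ 2 ≤ B) ∧
    (∀ ξ : ℝ, 0 < ξ → 𝓕 (fun v : ℝ => F (v : ℂ)) ξ = 0) ∧
    (∃ σ : ℝ, 0 < σ ∧ 𝓕 (fun v : ℝ => F (v : ℂ)) (-σ) ≠ 0) := by
  obtain rfl : F = hardyFn Q γ := funext hF
  obtain ⟨C, hC⟩ := exists_norm_hardyFn_le_div_one_add_sq hQ hγ
  have hcont := continuousOn_hardyFn hQ hγ
  have hdiff : DifferentiableOn ℂ (hardyFn Q γ) {z | z.im < 0} := differentiableOn_hardyFn hQ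
  have hfourier (ξ : ℝ) (hξ : 0 < ξ) := fourier_eq_zero_of_lowerHalfPlane hcont hdiff hC hξ
  refine ⟨hdiff,
    fun v s hs => norm_hardyFn_add_mul_I_le hQ.le v hs.le,
    (exists_integral_norm_hardyFn_sq_le hQ hγ).imp fun B hB s hs => hB s hs.le, hfourier, ?_⟩
  by_contra! hneg
  have hline : Continuous fun v : ℝ => hardyFn Q γ v :=
    hcont.comp_continuous continuous_ofReal fun v => by simp
  have hzero := eq_zero_of_fourier_eq_zero_of_ne_zero hline
    (integrable_of_norm_le_div_one_add_sq hline fun v => by simpa using hC v (by simp))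
    fun ξ hξ => hξ.lt_or_gt.elim (fun h => by simpa using hneg (-ξ) (by linarith)) (hfourier ξ)
  have h1 := congr_fun hzero 1
  simp [hardyFn] at h1
end
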